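/- arXiv:0812.2597 — 2 statements merged into one kernel-verified Lean document; each statement's English description precedes it below -/
import Mathlib

section
/- Let G be a simple graph on n ≥ 3 vertices with at least one edge. Then S(G) ≤ log₂(n−1), and S(G) = log₂(n−1) if and only if G is the complete graph K_n. -/
open Finset Matrix

variable {V : Type*}

/-- The degree sum `d_G = Tr(Δ(G)) = 2|E(G)|` of a graph. -/
def degreeSum [Fintype V] (G : SimpleGraph V) [DecidableRel G.Adj] : ℕ :=
  ∑ v : V, G.degree v

/-- The density matrix `ρ_G = L(G)/d_G` of a graph. -/
noncomputable def densityMatrix [Fintype V] [DecidableEq V]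
    (G : SimpleGraph V) [DecidableRel G.Adj] : Matrix V V ℝ :=
  ((degreeSum G : ℝ))⁻¹ • G.lapMatrix ℝ

/-- The von Neumann entropy `-∑ λᵢ log₂ λᵢ` of a (hermitian) matrix, computed
from its eigenvalues; the convention `0 log₂ 0 = 0` holds since `Real.logb 2 0 = 0`. -/
noncomputable def matEntropy [Fintype V] [DecidableEq V] (ρ : Matrix V V ℝ) : ℝ :=
  if h : ρ.IsHermitian then -∑ i : V, h.eigenvalues i * Real.logb 2 (h.eigenvalues i) else 0

/-- The von Neumann entropy `S(G)` of a graph. -/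
noncomputable def graphEntropy [Fintype V] [DecidableEq V]
    (G : SimpleGraph V) [DecidableRel G.Adj] : ℝ :=
  matEntropy (densityMatrix G)

/-! The eigenvalues of `ρ_G` are nonnegative, sum to `1`, and one of them vanishes because `L(G)`
kills the constant vector; so `S(G)` is the Shannon entropy of a probability vector on the other
`n - 1` eigenvalues. Jensen's inequality for `x log x` gives `S(G) ≤ log₂ (n - 1)`, with equality
iff all these eigenvalues equal `1/(n - 1)`, and Jensen for `x²` shows that this happens iff
`Tr ρ_G² = 1/(n - 1)`. Since `Tr L(G)² = ∑ᵥ dᵥ (dᵥ + 1)`, this reads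
`(n - 1) ∑ᵥ dᵥ (dᵥ + 1) = d_G²`, and by Cauchy–Schwarz it forces `d_G ≥ n (n - 1)`, i.e. `G = K_n`. -/

section UniformJensen
variable {ι : Type*} {S : Set ℝ} {f : ℝ → ℝ} {s : Finset ι} {p : ι → ℝ}

theorem Finset.nonempty_of_sum_eq_one (hsum : ∑ i ∈ s, p i = 1) : s.Nonempty :=
  nonempty_of_sum_ne_zero (hsum ▸ one_ne_zero)

theorem ConvexOn.card_mul_map_inv_card_le_sum (hf : ConvexOn ℝ S f) (hp : ∀ i ∈ s, p i ∈ S)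
    (hsum : ∑ i ∈ s, p i = 1) : #s * f (#s)⁻¹ ≤ ∑ i ∈ s, f (p i) := by
  have hs : (0 : ℝ) < #s := by simpa using Finset.nonempty_of_sum_eq_one hsum
  have := hf.map_sum_le (w := fun _ ↦ (#s : ℝ)⁻¹) (fun _ _ ↦ by positivity)
    (by simp [hs.ne']) hp
  simp only [smul_eq_mul, ← mul_sum, hsum, mul_one] at this
  rwa [le_inv_mul_iff₀ hs] at this

theorem StrictConvexOn.sum_map_eq_card_mul_map_inv_card_iff (hf : StrictConvexOn ℝ S f)
    (hp : ∀ i ∈ s, p i ∈ S) (hsum : ∑ i ∈ s, p i = 1) :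
    ∑ i ∈ s, f (p i) = #s * f (#s)⁻¹ ↔ ∀ i ∈ s, p i = (#s : ℝ)⁻¹ := by
  have hs : (0 : ℝ) < #s := by simpa using Finset.nonempty_of_sum_eq_one hsum
  refine ⟨fun h ↦ ?_, fun h ↦ by rw [sum_congr rfl fun i hi ↦ congrArg f (h i hi)]; simp⟩
  have hjensen := hf.map_sum_eq_iff_of_pos (w := fun _ ↦ (#s : ℝ)⁻¹) (fun _ _ ↦ by positivity)
    (by simp [hs.ne']) hp
  simp only [smul_eq_mul, ← mul_sum, hsum, mul_one, h, inv_mul_cancel_left₀ hs.ne'] at hjensen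
  intro i hi
  have hconst : ∑ j ∈ s, p j = #s * p i := by
    rw [sum_congr rfl fun j hj ↦ hjensen.mp trivial hj hi]; simp
  exact eq_inv_of_mul_eq_one_left (by rw [mul_comm, ← hconst, hsum])

end UniformJensen

section ShannonEntropy
variable {ι : Type*} {s : Finset ι} {p : ι → ℝ} {b : ℝ}

theorem card_mul_inv_card_mul_log_inv_card (hs : s.Nonempty) :
    (#s : ℝ) * ((#s : ℝ)⁻¹ * Real.log (#s : ℝ)⁻¹) = -Real.log #s := by
  rw [← mul_assoc, mul_inv_cancel₀ (by simpa using hs.ne_empty), one_mul, Real.log_inv]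

theorem neg_sum_mul_logb_eq :
    -∑ i ∈ s, p i * Real.logb b (p i) = -(∑ i ∈ s, p i * Real.log (p i)) / Real.log b := by
  simp only [Real.logb, neg_div, sum_div, mul_div_assoc]

theorem neg_sum_mul_logb_le_logb_card (hb : 1 < b) (hp : ∀ i ∈ s, 0 ≤ p i)
    (hsum : ∑ i ∈ s, p i = 1) : -∑ i ∈ s, p i * Real.logb b (p i) ≤ Real.logb b #s := by
  have hs := Finset.nonempty_of_sum_eq_one hsum
  have := Real.convexOn_mul_log.card_mul_map_inv_card_le_sum hp hsum
  rw [card_mul_inv_card_mul_log_inv_card hs] at this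
  rw [neg_sum_mul_logb_eq, Real.logb]
  gcongr
  · exact (Real.log_pos hb).le
  · linarith

theorem neg_sum_mul_logb_eq_logb_card_iff (hb : 1 < b) (hp : ∀ i ∈ s, 0 ≤ p i)
    (hsum : ∑ i ∈ s, p i = 1) :
    -∑ i ∈ s, p i * Real.logb b (p i) = Real.logb b #s ↔ ∀ i ∈ s, p i = (#s : ℝ)⁻¹ := by
  have hs := Finset.nonempty_of_sum_eq_one hsum
  rw [← Real.strictConvexOn_mul_log.sum_map_eq_card_mul_map_inv_card_iff hp hsum,
    card_mul_inv_card_mul_log_inv_card hs, neg_sum_mul_logb_eq, Real.logb,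
    div_left_inj' (Real.log_pos hb).ne', neg_eq_iff_eq_neg]

theorem sum_sq_eq_inv_card_iff (hp : ∀ i ∈ s, 0 ≤ p i) (hsum : ∑ i ∈ s, p i = 1) :
    ∑ i ∈ s, p i ^ 2 = (#s : ℝ)⁻¹ ↔ ∀ i ∈ s, p i = (#s : ℝ)⁻¹ := by
  have hs := Finset.nonempty_of_sum_eq_one hsum
  rw [← (strictConvexOn_pow le_rfl).sum_map_eq_card_mul_map_inv_card_iff hp hsum, sq,
    ← mul_assoc, mul_inv_cancel₀ (by simpa using hs.ne_empty), one_mul]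

end ShannonEntropy

namespace Matrix.IsHermitian
variable {𝕜 n : Type*} [RCLike 𝕜] [Fintype n] [DecidableEq n] {A : Matrix n n 𝕜}

theorem trace_mul_self_eq_sum_sq_eigenvalues (hA : A.IsHermitian) :
    (A * A).trace = ∑ i, ((hA.eigenvalues i ^ 2 : ℝ) : 𝕜) := by
  conv_lhs => rw [hA.spectral_theorem, ← map_mul, Unitary.conjStarAlgAut_apply, trace_mul_cycle,
    Unitary.coe_star_mul_self, one_mul, diagonal_mul_diagonal, trace_diagonal]
  simp [sq]

theorem exists_eigenvalues_eq_zero (hA : A.IsHermitian) (hdet : A.det = 0) :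
    ∃ i, hA.eigenvalues i = 0 := by
  simpa [hA.det_eq_prod_eigenvalues, prod_eq_zero_iff] using hdet

end Matrix.IsHermitian

namespace SimpleGraph
variable [Fintype V] [DecidableEq V] (G : SimpleGraph V) [DecidableRel G.Adj]
  {R : Type*} [CommRing R]

theorem trace_lapMatrix : (G.lapMatrix R).trace = ∑ v, (G.degree v : R) := by
  simp [lapMatrix, degMatrix]

theorem trace_lapMatrix_mul_self :
    (G.lapMatrix R * G.lapMatrix R).trace = ∑ v, ((G.degree v : R) ^ 2 + G.degree v) := by
  have hDA : (G.degMatrix R * G.adjMatrix R).trace = 0 := by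
    simp only [Matrix.trace, diag_apply, degMatrix, diagonal_mul, adjMatrix_apply, G.irrefl]
    simp
  have hAD : (G.adjMatrix R * G.degMatrix R).trace = 0 := by rw [trace_mul_comm, hDA]
  have hAA : (G.adjMatrix R * G.adjMatrix R).trace = ∑ v, (G.degree v : R) := by
    simp only [Matrix.trace, diag_apply, adjMatrix_mul_self_apply_self]
  rw [lapMatrix, sub_mul, mul_sub, mul_sub, trace_sub, trace_sub, trace_sub, hDA, hAD, hAA,
    sum_add_distrib]
  simp [Matrix.trace, degMatrix, sq]

end SimpleGraph

section DegreeSum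
variable [Fintype V] (G : SimpleGraph V) [DecidableRel G.Adj]

theorem degreeSum_pos (hG : G ≠ ⊥) : 0 < degreeSum G := by
  rw [degreeSum, SimpleGraph.sum_degrees_eq_twice_card_edges]
  exact Nat.mul_pos two_pos (card_pos.mpr (SimpleGraph.edgeFinset_nonempty.mpr hG))

theorem card_sub_one_mul_sum_degree_sq_add_degree_eq_degreeSum_sq_iff (hG : G ≠ ⊥) :
    ((Fintype.card V : ℝ) - 1) * ∑ v, ((G.degree v : ℝ) ^ 2 + G.degree v) =
      (degreeSum G : ℝ) ^ 2 ↔ G = ⊤ := by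
  have : Nontrivial V := SimpleGraph.nontrivial_iff.mp (nontrivial_of_ne G ⊥ hG)
  have hcast : ((Fintype.card V - 1 : ℕ) : ℝ) = Fintype.card V - 1 := by
    rw [Nat.cast_sub Fintype.card_pos, Nat.cast_one]
  have hD : (0 : ℝ) < degreeSum G := by exact_mod_cast degreeSum_pos G hG
  rw [degreeSum, Nat.cast_sum] at hD ⊢
  constructor
  · intro h
    set D := ∑ v, (G.degree v : ℝ)
    have hCS : D ^ 2 ≤ Fintype.card V * ∑ v, (G.degree v : ℝ) ^ 2 := by
      simpa using sq_sum_le_card_mul_sum_sq (s := univ) (f := fun v ↦ (G.degree v : ℝ))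
    rw [sum_add_distrib] at h
    -- `n · h` together with `(n - 1) · hCS` gives `n (n - 1) D ≤ D²`.
    have hmax : ∑ _v : V, ((Fintype.card V : ℝ) - 1) ≤ D := by
      rw [sum_const, card_univ, nsmul_eq_mul]
      nlinarith
    have hle : ∀ v ∈ univ, (G.degree v : ℝ) ≤ Fintype.card V - 1 := fun v _ ↦ by
      rw [← hcast]; exact_mod_cast Nat.le_sub_one_of_lt (G.degree_lt_card_verts v)
    have heq := (sum_eq_sum_iff_of_le hle).mp (le_antisymm (sum_le_sum hle) hmax)
    refine SimpleGraph.eq_top_iff_forall_isUniversal.mpr fun v ↦ (G.degree_eq_card_sub_one v).mp ?_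
    exact_mod_cast (heq v (mem_univ v)).trans hcast.symm
  · rintro rfl
    have hdeg (v : V) : (⊤ : SimpleGraph V).degree v = Fintype.card V - 1 :=
      (SimpleGraph.degree_eq_card_sub_one _ v).mpr
        (SimpleGraph.eq_top_iff_forall_isUniversal.mp rfl v)
    simp only [hdeg, hcast, sum_const, card_univ, nsmul_eq_mul]
    ring

end DegreeSum

section DensityMatrix
variable [Fintype V] [DecidableEq V] (G : SimpleGraph V) [DecidableRel G.Adj]

theorem posSemidef_densityMatrix : (densityMatrix G).PosSemidef :=
  (G.posSemidef_lapMatrix ℝ).smul (by positivity)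

theorem det_densityMatrix [Nonempty V] : (densityMatrix G).det = 0 := by
  rw [densityMatrix, det_smul, G.det_lapMatrix_eq_zero, mul_zero]

theorem trace_densityMatrix (hG : G ≠ ⊥) : (densityMatrix G).trace = 1 := by
  rw [densityMatrix, trace_smul, G.trace_lapMatrix, smul_eq_mul, ← Nat.cast_sum, ← degreeSum,
    inv_mul_cancel₀ (by exact_mod_cast (degreeSum_pos G hG).ne')]

theorem trace_densityMatrix_mul_self_eq_inv_iff (hG : G ≠ ⊥) :
    (densityMatrix G * densityMatrix G).trace = ((Fintype.card V : ℝ) - 1)⁻¹ ↔ G = ⊤ := by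
  have : Nontrivial V := SimpleGraph.nontrivial_iff.mp (nontrivial_of_ne G ⊥ hG)
  have hn : (Fintype.card V : ℝ) - 1 ≠ 0 :=
    sub_ne_zero.mpr (by exact_mod_cast Fintype.one_lt_card.ne')
  have hD : (degreeSum G : ℝ) ≠ 0 := by exact_mod_cast (degreeSum_pos G hG).ne'
  rw [densityMatrix, smul_mul_smul_comm, trace_smul, G.trace_lapMatrix_mul_self, smul_eq_mul,
    ← card_sub_one_mul_sum_degree_sq_add_degree_eq_degreeSum_sq_iff G hG]
  field_simp

theorem graphEntropy_eq (hρ : (densityMatrix G).IsHermitian) :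
    graphEntropy G = -∑ i, hρ.eigenvalues i * Real.logb 2 (hρ.eigenvalues i) := by
  rw [graphEntropy, matEntropy, dif_pos hρ]

end DensityMatrix

theorem entropy_le_max_eq_iff_complete_general [Fintype V] [DecidableEq V]
    (G : SimpleGraph V) [DecidableRel G.Adj]
    (hE : G.edgeFinset.Nonempty) :
    graphEntropy G ≤ Real.logb 2 ((Fintype.card V : ℝ) - 1) ∧
    (graphEntropy G = Real.logb 2 ((Fintype.card V : ℝ) - 1) ↔ G = ⊤) := by
  have hG : G ≠ ⊥ := SimpleGraph.edgeFinset_nonempty.mp hE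
  have : Nontrivial V := SimpleGraph.nontrivial_iff.mp (nontrivial_of_ne G ⊥ hG)
  have hρ := posSemidef_densityMatrix G
  set μ := hρ.isHermitian.eigenvalues
  obtain ⟨j, hj⟩ : ∃ j, μ j = 0 := hρ.isHermitian.exists_eigenvalues_eq_zero (det_densityMatrix G)
  set s := univ.erase j
  have hμ : ∀ i ∈ s, 0 ≤ μ i := fun i _ ↦ hρ.eigenvalues_nonneg i
  have hsum : ∑ i ∈ s, μ i = 1 := by
    rw [sum_erase _ hj, ← trace_densityMatrix G hG, hρ.isHermitian.trace_eq_sum_eigenvalues]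
    simp [μ]
  have hcard : (#s : ℝ) = Fintype.card V - 1 := by
    simp [s, card_erase_of_mem, Nat.cast_sub Fintype.card_pos]
  have hS : graphEntropy G = -∑ i ∈ s, μ i * Real.logb 2 (μ i) := by
    rw [graphEntropy_eq G hρ.isHermitian, sum_erase _ (by simp [hj])]
  have hsq : (densityMatrix G * densityMatrix G).trace = ∑ i ∈ s, μ i ^ 2 := by
    rw [hρ.isHermitian.trace_mul_self_eq_sum_sq_eigenvalues, sum_erase _ (by simp [hj])]
    simp [μ]
  rw [hS, ← hcard]
  refine ⟨neg_sum_mul_logb_le_logb_card one_lt_two hμ hsum, ?_⟩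
  rw [neg_sum_mul_logb_eq_logb_card_iff one_lt_two hμ hsum, ← sum_sq_eq_inv_card_iff hμ hsum,
    ← hsq, hcard, trace_densityMatrix_mul_self_eq_inv_iff G hG]

/-- For a graph `G` on `n ≥ 3` vertices with at least one edge,
`S(G) ≤ log₂ (n-1)`, with equality iff `G` is the complete graph `K_n`. -/
theorem entropy_le_max_eq_iff_complete [Fintype V] [DecidableEq V]
    (G : SimpleGraph V) [DecidableRel G.Adj]
    (hn : 3 ≤ Fintype.card V) (hE : G.edgeFinset.Nonempty) :
    graphEntropy G ≤ Real.logb 2 ((Fintype.card V : ℝ) - 1) ∧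
    (graphEntropy G = Real.logb 2 ((Fintype.card V : ℝ) - 1) ↔ G = ⊤) :=
  entropy_le_max_eq_iff_complete_general G hE
end

section
/- Let (G_n) be a sequence of simple graphs, G_n on n vertices, such that each G_n contains a vertex adjacent to all other vertices, and suppose the average degrees d̄_{G_n} = d_{G_n}/n converge to a finite limit d_∞ as n → ∞. Then limsup_{n→∞} S(G_n)/log₂(n−1) ≤ 1 − 1/d_∞. -/
open Finset Matrix

variable {V : Type*}

/-!
If `v` is adjacent to all other vertices of `G` on `n` vertices, then `n • e_v - 𝟙` is an
eigenvector of `L(G)` for the eigenvalue `n`, so `ρ_G` has the eigenvalue `μ = n / d_G`.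
The other `n - 1` eigenvalues sum to `1 - μ`, so by concavity of `t ↦ -t log t` their entropy is at
most that of `n - 1` equal eigenvalues, `-(1 - μ) log(1 - μ) + (1 - μ) log(n - 1)`. Altogether
`S(G) log 2 ≤ 1 + (1 - μ) log(n - 1)`, i.e. `S(G) / log₂(n - 1) ≤ 1 - n / d_G + 1 / log(n - 1)`,
and the right-hand side tends to `1 - 1 / d_∞` since `d_G ≥ 2(n - 1)` keeps `d_∞ ≥ 1` away from `0`.
-/

open Real Filter Topology

namespace Real

lemma sum_negMulLog_le {ι : Type*} (s : Finset ι) {p : ι → ℝ} (hp : ∀ i ∈ s, 0 ≤ p i) :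
    ∑ i ∈ s, negMulLog (p i) ≤ negMulLog (∑ i ∈ s, p i) + (∑ i ∈ s, p i) * log #s := by
  rcases s.eq_empty_or_nonempty with rfl | hs
  · simp
  have hcard : (0 : ℝ) < #s := by exact_mod_cast hs.card_pos
  have hJensen := concaveOn_negMulLog.le_map_sum (t := s) (w := fun _ ↦ (#s : ℝ)⁻¹) (p := p)
    (fun _ _ ↦ by positivity) (by simp [hcard.ne']) (fun i hi ↦ Set.mem_Ici.mpr (hp i hi))
  have hsplit : negMulLog ((#s : ℝ)⁻¹ * ∑ i ∈ s, p i)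
      = (#s : ℝ)⁻¹ * (negMulLog (∑ i ∈ s, p i) + (∑ i ∈ s, p i) * log #s) := by
    rw [negMulLog_mul, negMulLog_def]
    simp only [log_inv]
    ring
  simp only [smul_eq_mul, ← mul_sum, hsplit] at hJensen
  exact le_of_mul_le_mul_left hJensen (inv_pos.mpr hcard)

lemma sum_negMulLog_le_of_sum_eq_one {ι : Type*} [Fintype ι] [DecidableEq ι] {p : ι → ℝ}
    (hp : ∀ i, 0 ≤ p i) (hsum : ∑ i, p i = 1) (i₀ : ι) :
    ∑ i, negMulLog (p i) ≤ 1 + (1 - p i₀) * log (Fintype.card ι - 1) := by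
  have hrest : ∑ i ∈ univ.erase i₀, p i = 1 - p i₀ := by
    rw [← hsum, ← add_sum_erase _ _ (mem_univ i₀)]
    ring
  have hcard : (#(univ.erase i₀) : ℝ) = Fintype.card ι - 1 := by
    rw [card_erase_of_mem (mem_univ _), Nat.cast_sub (card_pos.mpr ⟨i₀, mem_univ i₀⟩)]
    simp
  have hrest_nonneg : 0 ≤ 1 - p i₀ := hrest ▸ sum_nonneg fun i _ ↦ hp i
  calc ∑ i, negMulLog (p i)
      = negMulLog (p i₀) + ∑ i ∈ univ.erase i₀, negMulLog (p i) :=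
        (add_sum_erase _ _ (mem_univ i₀)).symm
    _ ≤ negMulLog (p i₀) + (negMulLog (1 - p i₀) + (1 - p i₀) * log (Fintype.card ι - 1)) := by
        gcongr
        simpa only [hrest, hcard] using sum_negMulLog_le (univ.erase i₀) fun i _ ↦ hp i
    _ ≤ 1 + (1 - p i₀) * log (Fintype.card ι - 1) := by
        linarith [negMulLog_le_one_sub_self (hp i₀), negMulLog_le_one_sub_self hrest_nonneg]

end Real

namespace Matrix

variable {n : Type*} [Fintype n] [DecidableEq n] {A : Matrix n n ℝ}

lemma IsHermitian.sum_eigenvalues_eq_trace (hA : A.IsHermitian) :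
    ∑ i, hA.eigenvalues i = A.trace := by
  simpa using hA.trace_eq_sum_eigenvalues.symm

lemma IsHermitian.exists_eigenvalues_eq_of_mulVec_eq_smul (hA : A.IsHermitian) {x : n → ℝ}
    (hx : x ≠ 0) {μ : ℝ} (h : A *ᵥ x = μ • x) : ∃ i, hA.eigenvalues i = μ := by
  have hμ : μ ∈ spectrum ℝ A := by
    rw [← spectrum_toLin']
    exact (Module.End.hasEigenvalue_of_hasEigenvector
      ⟨Module.End.mem_eigenspace_iff.mpr (by simpa using h), hx⟩).mem_spectrum
  simpa [hA.spectrum_real_eq_range_eigenvalues] using hμ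

lemma IsHermitian.matEntropy_eq (hA : A.IsHermitian) :
    matEntropy A = (∑ i, negMulLog (hA.eigenvalues i)) / log 2 := by
  simp only [matEntropy, dif_pos hA, negMulLog, logb, sum_div, ← sum_neg_distrib]
  congr 1 with i
  ring

lemma PosSemidef.matEntropy_nonneg (hA : A.PosSemidef) (htr : A.trace = 1) :
    0 ≤ matEntropy A := by
  have hsum := hA.1.sum_eigenvalues_eq_trace
  rw [hA.1.matEntropy_eq]
  refine div_nonneg (sum_nonneg fun i _ ↦ negMulLog_nonneg (hA.eigenvalues_nonneg i) ?_)
    (log_nonneg one_le_two)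
  exact htr ▸ hsum ▸ single_le_sum (fun j _ ↦ hA.eigenvalues_nonneg j) (mem_univ i)

lemma PosSemidef.matEntropy_le_of_mulVec_eq_smul (hA : A.PosSemidef) (htr : A.trace = 1)
    {x : n → ℝ} (hx : x ≠ 0) {μ : ℝ} (h : A *ᵥ x = μ • x) :
    matEntropy A ≤ (1 + (1 - μ) * log (Fintype.card n - 1)) / log 2 := by
  obtain ⟨i₀, rfl⟩ := hA.1.exists_eigenvalues_eq_of_mulVec_eq_smul hx h
  rw [hA.1.matEntropy_eq]
  gcongr
  exact sum_negMulLog_le_of_sum_eq_one hA.eigenvalues_nonneg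
    (hA.1.sum_eigenvalues_eq_trace.trans htr) i₀

end Matrix

namespace SimpleGraph

variable [Fintype V] [DecidableEq V] {G : SimpleGraph V} [DecidableRel G.Adj]

lemma posSemidef_densityMatrix : (densityMatrix G).PosSemidef :=
  (posSemidef_lapMatrix ℝ G).smul (by positivity)

lemma trace_densityMatrix (hG : degreeSum G ≠ 0) : (densityMatrix G).trace = 1 := by
  have htrace : (G.lapMatrix ℝ).trace = degreeSum G := by
    simp [Matrix.trace, lapMatrix, degMatrix, degreeSum]
  rw [densityMatrix, Matrix.trace_smul, htrace, smul_eq_mul, inv_mul_cancel₀ (by exact_mod_cast hG)]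

lemma graphEntropy_nonneg (hG : degreeSum G ≠ 0) : 0 ≤ graphEntropy G := by
  rw [graphEntropy]
  exact posSemidef_densityMatrix.matEntropy_nonneg (trace_densityMatrix hG)

variable {v : V}

lemma degree_eq_card_sub_one_of_forall_adj (hv : ∀ u, u ≠ v → G.Adj v u) :
    G.degree v = Fintype.card V - 1 := by
  have : G.neighborFinset v = univ.erase v := by
    ext u
    simpa using ⟨fun h ↦ h.ne', hv u⟩
  rw [← card_neighborFinset_eq_degree, this, card_erase_of_mem (mem_univ v), card_univ]

lemma two_mul_card_sub_one_le_degreeSum (hv : ∀ u, u ≠ v → G.Adj v u) :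
    2 * (Fintype.card V - 1) ≤ degreeSum G := by
  rw [degreeSum, sum_degrees_eq_twice_card_edges, ← degree_eq_card_sub_one_of_forall_adj hv]
  exact Nat.mul_le_mul_left 2 (G.degree_le_card_edgeFinset v)

lemma lapMatrix_mulVec_single_of_forall_adj (hv : ∀ u, u ≠ v → G.Adj v u) :
    G.lapMatrix ℝ *ᵥ Pi.single v 1 = (Fintype.card V : ℝ) • Pi.single v 1 - 1 := by
  ext u
  rw [lapMatrix_mulVec_apply]
  rcases eq_or_ne u v with rfl | huv
  · simp [degree_eq_card_sub_one_of_forall_adj hv, Nat.cast_pred (Fintype.card_pos_iff.mpr ⟨u⟩)]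
  · have hvu : v ∈ G.neighborFinset u := by simpa using (hv u huv).symm
    simp [huv, Pi.single_apply, hvu]

lemma densityMatrix_mulVec_of_forall_adj (hv : ∀ u, u ≠ v → G.Adj v u) :
    densityMatrix G *ᵥ ((Fintype.card V : ℝ) • Pi.single v 1 - 1)
      = ((Fintype.card V : ℝ) / degreeSum G) • ((Fintype.card V : ℝ) • Pi.single v 1 - 1) := by
  rw [densityMatrix, smul_mulVec, mulVec_sub, mulVec_smul, lapMatrix_mulVec_single_of_forall_adj hv,
    show (1 : V → ℝ) = fun _ ↦ 1 from rfl, lapMatrix_mulVec_const_eq_zero, sub_zero, smul_smul,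
    inv_mul_eq_div]

lemma graphEntropy_le_of_forall_adj (hv : ∀ u, u ≠ v → G.Adj v u) (hV : 2 ≤ Fintype.card V) :
    graphEntropy G
      ≤ (1 + (1 - Fintype.card V / degreeSum G) * log (Fintype.card V - 1)) / log 2 := by
  have hG : degreeSum G ≠ 0 := by
    have := two_mul_card_sub_one_le_degreeSum hv
    omega
  have hx : (Fintype.card V : ℝ) • Pi.single v 1 - 1 ≠ 0 := by
    intro h
    have hcard : (2 : ℝ) ≤ Fintype.card V := by exact_mod_cast hV
    have := congrFun h v
    simp only [Pi.sub_apply, Pi.smul_apply, Pi.single_eq_same, smul_eq_mul, mul_one, Pi.one_apply,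
      Pi.zero_apply] at this
    linarith
  exact posSemidef_densityMatrix.matEntropy_le_of_mulVec_eq_smul (trace_densityMatrix hG) hx
    (densityMatrix_mulVec_of_forall_adj hv)

lemma graphEntropy_div_logb_le_of_forall_adj (hv : ∀ u, u ≠ v → G.Adj v u)
    (hV : 3 ≤ Fintype.card V) :
    graphEntropy G / logb 2 (Fintype.card V - 1)
      ≤ 1 - Fintype.card V / degreeSum G + 1 / log (Fintype.card V - 1) := by
  have hlog : 0 < log (Fintype.card V - 1) := by
    have : (3 : ℝ) ≤ Fintype.card V := by exact_mod_cast hV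
    exact log_pos (by linarith)
  have h := graphEntropy_le_of_forall_adj hv (by omega)
  rw [le_div_iff₀ (log_pos one_lt_two)] at h
  rw [logb, div_div_eq_mul_div, div_le_iff₀ hlog]
  calc graphEntropy G * log 2
      ≤ 1 + (1 - Fintype.card V / degreeSum G) * log (Fintype.card V - 1) := h
    _ = (1 - Fintype.card V / degreeSum G + 1 / log (Fintype.card V - 1))
          * log (Fintype.card V - 1) := by
        field_simp
        ring

end SimpleGraph

lemma limsup_le_one_sub_one_div_of_le {f d : ℕ → ℝ} {dinf : ℝ} (hdinf : dinf ≠ 0)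
    (hd : Tendsto (fun n ↦ d n / n) atTop (𝓝 dinf)) (hf₀ : ∀ᶠ n in atTop, 0 ≤ f n)
    (hf : ∀ᶠ n : ℕ in atTop, f n ≤ 1 - n / d n + 1 / log (n - 1)) :
    limsup f atTop ≤ 1 - 1 / dinf := by
  have hlim : Tendsto (fun n : ℕ ↦ 1 - n / d n + 1 / log (n - 1)) atTop (𝓝 (1 - 1 / dinf + 0)) := by
    refine (tendsto_const_nhds.sub ?_).add ?_
    · simpa only [inv_div, one_div] using hd.inv₀ hdinf
    · exact tendsto_const_nhds.div_atTop (tendsto_log_atTop.comp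
        (tendsto_atTop_add_const_right _ (-1) tendsto_natCast_atTop_atTop))
  rw [add_zero] at hlim
  calc limsup f atTop ≤ limsup (fun n : ℕ ↦ 1 - n / d n + 1 / log (n - 1)) atTop :=
        limsup_le_limsup hf (isBoundedUnder_of_eventually_ge hf₀).isCoboundedUnder_le
          hlim.isBoundedUnder_le
    _ = 1 - 1 / dinf := hlim.limsup_eq

/-- Let `Gₙ` be a sequence of graphs on `n` vertices, each containing
a vertex adjacent to all the others, whose average degrees `d_{Gₙ}/n` converge to a
finite limit `d_∞`. Then `limsup S(Gₙ)/log₂(n-1) ≤ 1 - 1/d_∞`. -/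
theorem entropy_limsup_of_dominating_vertex
    (G : (n : ℕ) → SimpleGraph (Fin n)) (hdec : ∀ n, DecidableRel (G n).Adj)
    (hv : ∀ n, 2 ≤ n → ∃ v : Fin n, ∀ u, u ≠ v → (G n).Adj v u)
    (dinf : ℝ)
    (hd : Filter.Tendsto
      (fun n : ℕ => (@degreeSum (Fin n) _ (G n) (hdec n) : ℝ) / (n : ℝ))
      Filter.atTop (nhds dinf)) :
    Filter.limsup
      (fun n : ℕ => (@graphEntropy (Fin n) _ _ (G n) (hdec n)) / Real.logb 2 ((n : ℝ) - 1))
      Filter.atTop ≤ 1 - 1 / dinf := by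
  have hbounds : ∀ᶠ n : ℕ in atTop,
      (0 ≤ @graphEntropy (Fin n) _ _ (G n) (hdec n) / logb 2 ((n : ℝ) - 1) ∧
        @graphEntropy (Fin n) _ _ (G n) (hdec n) / logb 2 ((n : ℝ) - 1)
          ≤ 1 - n / (@degreeSum (Fin n) _ (G n) (hdec n) : ℝ) + 1 / log ((n : ℝ) - 1)) ∧
      1 ≤ (@degreeSum (Fin n) _ (G n) (hdec n) : ℝ) / n := by
    filter_upwards [eventually_ge_atTop 3] with n hn
    let _ := hdec n
    obtain ⟨v, hv⟩ := hv n (by omega)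
    have hdeg := SimpleGraph.two_mul_card_sub_one_le_degreeSum hv
    have hn' : (3 : ℝ) ≤ n := by exact_mod_cast hn
    rw [Fintype.card_fin] at hdeg
    refine ⟨⟨div_nonneg (SimpleGraph.graphEntropy_nonneg (by omega))
      (logb_nonneg one_lt_two (by linarith)), ?_⟩, ?_⟩
    · simpa using SimpleGraph.graphEntropy_div_logb_le_of_forall_adj hv (by simpa using hn)
    · rw [one_le_div (by positivity)]
      exact_mod_cast (by omega : n ≤ degreeSum (G n))
  have hdinf : 1 ≤ dinf := ge_of_tendsto hd (hbounds.mono fun _ h ↦ h.2)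
  exact limsup_le_one_sub_one_div_of_le (by linarith) hd (hbounds.mono fun _ h ↦ h.1.1)
    (hbounds.mono fun _ h ↦ h.1.2)
end
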